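/- There is a universal constant K > 0 such that: for hyperbolic disks B₁ = B(c₁,r₁), B₂ = B(c₂,r₂) and a point p with dist(p,c₂) = r₂, if B₁ ∩ B₂ ≠ ∅ (equivalently dist(c₁,c₂) < r₁ + r₂), then either dist(p,c₁) < r₁ + K or the angle ∠c₁ p c₂ < 10·exp((r₁ − dist(p,c₁))/2). -/

import Mathlib

/-!
Take `K = 2` and suppose `ρ ≥ r₁ + 2` and `α ≥ 10 exp((r₁ - ρ)/2)`. The law of cosines reads
`cosh d = cosh (ρ - r₂) + sinh ρ sinh r₂ (1 - cos α)`, so `|ρ - r₂| ≤ d < r₁ + r₂`, which forces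
`ρ, r₂ ≥ 1`. There `sinh x ≥ eˣ/3`, and Jordan's bound `1 - cos α ≥ 2α²/π²` turns the second
summand into at least `200/(9π²) · e^{r₁ + r₂} > e^{r₁ + r₂} > e^d ≥ cosh d`, a contradiction.
-/

open Real

namespace Real

lemma cosh_mul_cosh_sub_sinh_mul_sinh_mul_cos (ρ r α : ℝ) :
    cosh ρ * cosh r - sinh ρ * sinh r * cos α =
      cosh (ρ - r) + sinh ρ * sinh r * (1 - cos α) := by
  rw [cosh_sub]; ring

lemma abs_sub_le_of_cosh_eq {ρ r d α : ℝ} (hρ : 0 ≤ ρ) (hr : 0 ≤ r) (hd : 0 ≤ d)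
    (h : cosh d = cosh ρ * cosh r - sinh ρ * sinh r * cos α) : |ρ - r| ≤ d := by
  have hsinh : 0 ≤ sinh ρ * sinh r := mul_nonneg (sinh_nonneg_iff.2 hρ) (sinh_nonneg_iff.2 hr)
  have hcosh : cosh (ρ - r) ≤ cosh d := by
    rw [h, cosh_mul_cosh_sub_sinh_mul_sinh_mul_cos]
    nlinarith [cos_le_one α]
  simpa [abs_of_nonneg hd] using cosh_le_cosh.1 hcosh

lemma cosh_le_exp {x : ℝ} (hx : 0 ≤ x) : cosh x ≤ exp x := by
  rw [← cosh_add_sinh]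
  linarith [sinh_nonneg_iff.2 hx]

lemma exp_div_three_le_sinh {x : ℝ} (hx : 1 ≤ x) : exp x / 3 ≤ sinh x := by
  have h3 : 3 ≤ exp (2 * x) := by linarith [add_one_le_exp (2 * x)]
  have hmul : exp (-x) * exp (2 * x) = exp x := by rw [← exp_add]; ring_nf
  rw [sinh_eq]
  nlinarith [exp_pos (-x)]

lemma exp_add_lt_sinh_mul_sinh_mul_one_sub_cos {ρ r s α : ℝ} (hρ : 1 ≤ ρ) (hr : 1 ≤ r)
    (hα : |α| ≤ π) (h : 100 * exp (s - ρ) ≤ α ^ 2) :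
    exp (s + r) < sinh ρ * sinh r * (1 - cos α) := by
  have hjordan : 2 / π ^ 2 * (100 * exp (s - ρ)) ≤ 1 - cos α := by
    have := cos_le_one_sub_mul_cos_sq hα
    nlinarith [div_nonneg zero_le_two (sq_nonneg π)]
  have hsinh : exp ρ / 3 * (exp r / 3) ≤ sinh ρ * sinh r :=
    mul_le_mul (exp_div_three_le_sinh hρ) (exp_div_three_le_sinh hr) (by positivity)
      (sinh_nonneg_iff.2 (by linarith))
  have hexp : exp ρ * exp r * exp (s - ρ) = exp (s + r) := by
    rw [← exp_add, ← exp_add]; ring_nf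
  have hconst : 1 < 200 / (9 * π ^ 2) := by
    rw [lt_div_iff₀ (by positivity)]
    nlinarith [pi_lt_d2, pi_pos]
  calc exp (s + r) < 200 / (9 * π ^ 2) * exp (s + r) := lt_mul_of_one_lt_left (exp_pos _) hconst
    _ = exp ρ / 3 * (exp r / 3) * (2 / π ^ 2 * (100 * exp (s - ρ))) := by
        rw [← hexp]; field_simp; ring
    _ ≤ sinh ρ * sinh r * (1 - cos α) :=
        mul_le_mul hsinh hjordan (by positivity) (hsinh.trans' (by positivity))

end Real

/-- There is a universal constant `K > 0` such that: for hyperbolic disks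
`B₁ = B(c₁,r₁)`, `B₂ = B(c₂,r₂)` and a point `p` with `dist(p,c₂) = r₂`,
if `B₁ ∩ B₂ ≠ ∅`, i.e. `d = dist(c₁,c₂) < r₁ + r₂`, then writing `ρ = dist(p,c₁)`
and `α = ∠c₁ p c₂` (so that `cosh d = cosh ρ cosh r₂ − sinh ρ sinh r₂ cos α` by the
hyperbolic law of cosines), either `ρ < r₁ + K` or `α < 10 exp((r₁ − ρ)/2)`. -/
theorem intersecting_disks_angle_bound :
    ∃ K > (0 : ℝ), ∀ r₁ r₂ d ρ α : ℝ, 0 < ρ → 0 < r₂ → 0 ≤ d →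
      α ∈ Set.Ioo 0 π →
      Real.cosh d = Real.cosh ρ * Real.cosh r₂ - Real.sinh ρ * Real.sinh r₂ * Real.cos α →
      d < r₁ + r₂ →
      ρ < r₁ + K ∨ α < 10 * Real.exp ((r₁ - ρ) / 2) := by
  refine ⟨2, two_pos, fun r₁ r₂ d ρ α hρ hr₂ hd ⟨hα₀, hαπ⟩ hlaw hdist => ?_⟩
  rw [or_iff_not_imp_left, not_lt]
  intro hfar
  by_contra! hα
  have htri := abs_sub_le_of_cosh_eq hρ.le hr₂.le hd hlaw
  have hsq : 100 * exp (r₁ - ρ) ≤ α ^ 2 := by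
    have hpow : (10 * exp ((r₁ - ρ) / 2)) ^ 2 = 100 * exp (r₁ - ρ) := by
      rw [mul_pow, ← exp_nat_mul]; ring_nf
    exact hpow ▸ pow_le_pow_left₀ (by positivity) hα 2
  have hρ₁ : 1 ≤ ρ := by linarith [neg_abs_le (ρ - r₂)]
  have hr₂₁ : 1 ≤ r₂ := by linarith [le_abs_self (ρ - r₂)]
  have hbig := exp_add_lt_sinh_mul_sinh_mul_one_sub_cos hρ₁ hr₂₁
    (by rw [abs_of_pos hα₀]; exact hαπ.le) hsq
  have hcosh : cosh d < exp (r₁ + r₂) :=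
    (cosh_le_exp hd).trans_lt (exp_lt_exp.2 hdist)
  rw [hlaw, cosh_mul_cosh_sub_sinh_mul_sinh_mul_cos] at hcosh
  linarith [one_le_cosh (ρ - r₂)]
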